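/- For positive integers k, n, s with s not dividing k: \sum_{j=0}^{k} (-1)^j h_j(x_1,...,x_n) H_{k-j}^{(s-1)}(x_1,...,x_n) = 0, and likewise \sum_{j=0}^{k} (-1)^j e_j(x_1,...,x_n) E_{k-j}^{(s-1)}(x_1,...,x_n) = 0. -/

import Mathlib

/-!
Replacing `X` by `-X` turns each alternating sum into the `k`-th coefficient of a product of
generating series, which can be computed factor by factor: since
`(1 - cX)(1 + cX + ⋯ + (cX)^(s-1)) = 1 - c^s X^s`, the products are
`∏ (1 - (-xᵢ)^s X^s)⁻¹` and `∏ (1 - xᵢ^s X^s)`. Both are power series in `X^s`, so their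
coefficients vanish at every `k` not divisible by `s`.
-/

/-- Generating series of the generalized elementary symmetric functions. -/
noncomputable def EgS (s n : ℕ) (x : Fin n → ℂ) : PowerSeries ℂ :=
  ∏ i, ∑ j ∈ Finset.range (s + 1), PowerSeries.C (x i ^ j) * PowerSeries.X ^ j

/-- Generating series of the generalized complete symmetric functions. -/
noncomputable def HgS (s n : ℕ) (x : Fin n → ℂ) : PowerSeries ℂ :=
  ∏ i, (∑ j ∈ Finset.range (s + 1), PowerSeries.C ((-x i) ^ j) * PowerSeries.X ^ j)⁻¹

/-- `E_k^{(s)}(x₁,…,xₙ)`. -/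
noncomputable def Eg (s n : ℕ) (x : Fin n → ℂ) (k : ℕ) : ℂ :=
  PowerSeries.coeff k (EgS s n x)

/-- `H_k^{(s)}(x₁,…,xₙ)`. -/
noncomputable def Hg (s n : ℕ) (x : Fin n → ℂ) (k : ℕ) : ℂ :=
  PowerSeries.coeff k (HgS s n x)

/-- The elementary symmetric function `e_k(x₁,…,xₙ)`. -/
noncomputable def eg (n : ℕ) (x : Fin n → ℂ) (k : ℕ) : ℂ :=
  PowerSeries.coeff k (∏ i, (1 + PowerSeries.C (x i) * PowerSeries.X))

/-- The complete homogeneous symmetric function `h_k(x₁,…,xₙ)`. -/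
noncomputable def hg (n : ℕ) (x : Fin n → ℂ) (k : ℕ) : ℂ :=
  PowerSeries.coeff k (∏ i, (1 - PowerSeries.C (x i) * PowerSeries.X)⁻¹)

namespace PowerSeries

open Finset

section Ring

variable (R : Type*) [Ring R]

def supportedOnMultiples (s : ℕ) : Subring R⟦X⟧ where
  carrier := {f | ∀ m, ¬ s ∣ m → coeff m f = 0}
  mul_mem' {f g} hf hg m hm := by
    rw [coeff_mul]
    refine sum_eq_zero fun p hp => ?_
    rw [HasAntidiagonal.mem_antidiagonal] at hp
    by_cases h₁ : s ∣ p.1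
    · rw [hg p.2 fun h₂ => hm (hp ▸ dvd_add h₁ h₂), mul_zero]
    · rw [hf p.1 h₁, zero_mul]
  one_mem' m hm := by
    rw [coeff_one, if_neg (by rintro rfl; exact hm (dvd_zero s))]
  add_mem' {f g} hf hg m hm := by
    rw [map_add, hf m hm, hg m hm, add_zero]
  zero_mem' m _ := by
    rw [map_zero]
  neg_mem' {f} hf m hm := by
    rw [map_neg, hf m hm, neg_zero]

variable {R}

theorem mem_supportedOnMultiples {s : ℕ} {f : R⟦X⟧} :
    f ∈ supportedOnMultiples R s ↔ ∀ m, ¬ s ∣ m → coeff m f = 0 :=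
  Iff.rfl

theorem C_mem_supportedOnMultiples (s : ℕ) (a : R) : C a ∈ supportedOnMultiples R s := by
  intro m hm
  rw [coeff_C, if_neg (by rintro rfl; exact hm (dvd_zero s))]

theorem X_pow_mem_supportedOnMultiples (s : ℕ) : (X : R⟦X⟧) ^ s ∈ supportedOnMultiples R s := by
  intro m hm
  rw [coeff_X_pow, if_neg (by rintro rfl; exact hm dvd_rfl)]

theorem one_sub_C_mul_X_pow_mem_supportedOnMultiples (s : ℕ) (a : R) :
    1 - C a * X ^ s ∈ supportedOnMultiples R s :=
  sub_mem (one_mem _) <|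
    mul_mem (C_mem_supportedOnMultiples s a) (X_pow_mem_supportedOnMultiples s)

end Ring

theorem inv_mem_supportedOnMultiples {k : Type*} [Field k] {s : ℕ} {f : k⟦X⟧}
    (hf : f ∈ supportedOnMultiples k s) : f⁻¹ ∈ supportedOnMultiples k s := by
  intro m
  induction m using Nat.strong_induction_on with
  | _ m ih =>
    intro hm
    rw [coeff_inv, if_neg (by rintro rfl; exact hm (dvd_zero s))]
    refine mul_eq_zero_of_right _ (sum_eq_zero fun p hp => ?_)
    rw [HasAntidiagonal.mem_antidiagonal] at hp
    split_ifs with hlt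
    · by_cases h₁ : s ∣ p.1
      · rw [ih p.2 hlt fun h₂ => hm (hp ▸ dvd_add h₁ h₂), mul_zero]
      · rw [hf p.1 h₁, zero_mul]
    · rfl

section CommRing

variable {R : Type*} [CommRing R]

theorem coeff_rescale_neg_one_mul (f g : R⟦X⟧) (k : ℕ) :
    coeff k (rescale (-1) f * g) =
      ∑ j ∈ range (k + 1), (-1) ^ j * coeff j f * coeff (k - j) g := by
  rw [coeff_mul, Nat.sum_antidiagonal_eq_sum_range_succ_mk]
  simp only [coeff_rescale]

theorem rescale_C (a c : R) : rescale a (C c) = C c := by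
  ext n
  rw [coeff_rescale, coeff_C]
  split_ifs with h
  · rw [h, pow_zero, one_mul]
  · rw [mul_zero]

theorem constantCoeff_rescale (a : R) (f : R⟦X⟧) :
    constantCoeff (rescale a f) = constantCoeff f := by
  rw [← coeff_zero_eq_constantCoeff_apply, coeff_rescale, pow_zero, one_mul,
    coeff_zero_eq_constantCoeff_apply]

theorem one_sub_C_mul_X_mul_geom_sum (c : R) (s : ℕ) :
    (1 - C c * X) * ∑ j ∈ range s, C (c ^ j) * X ^ j = 1 - C (c ^ s) * X ^ s := by
  simp_rw [map_pow, ← mul_pow]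
  exact mul_neg_geom_sum _ s

theorem rescale_neg_one_one_sub_C_mul_X (c : R) :
    rescale (-1) (1 - C c * X) = 1 - C (-c) * X := by
  rw [map_sub, map_one, map_mul, rescale_C, rescale_X, map_neg, map_neg, map_one]
  ring

theorem rescale_neg_one_one_add_C_mul_X_mul_geom_sum (c : R) (s : ℕ) :
    rescale (-1) (1 + C c * X) * ∑ j ∈ range s, C (c ^ j) * X ^ j = 1 - C (c ^ s) * X ^ s := by
  rw [← sub_neg_eq_add, ← neg_mul, ← map_neg, rescale_neg_one_one_sub_C_mul_X, neg_neg]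
  exact one_sub_C_mul_X_mul_geom_sum c s

end CommRing

section Field

variable {k : Type*} [Field k]

theorem rescale_inv (a : k) (f : k⟦X⟧) : rescale a f⁻¹ = (rescale a f)⁻¹ := by
  by_cases h : constantCoeff f = 0
  · rw [inv_eq_zero.2 h, map_zero, eq_comm, inv_eq_zero, constantCoeff_rescale, h]
  · rw [eq_comm, inv_eq_iff_mul_eq_one (by rwa [constantCoeff_rescale]), ← map_mul,
      PowerSeries.inv_mul_cancel f h, map_one]

theorem rescale_neg_one_inv_one_sub_C_mul_X_mul_inv_geom_sum (c : k) (s : ℕ) :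
    rescale (-1) (1 - C c * X)⁻¹ * (∑ j ∈ range s, C ((-c) ^ j) * X ^ j)⁻¹ =
      (1 - C ((-c) ^ s) * X ^ s)⁻¹ := by
  rw [rescale_inv, ← PowerSeries.mul_inv_rev, mul_comm, rescale_neg_one_one_sub_C_mul_X,
    one_sub_C_mul_X_mul_geom_sum]

end Field

end PowerSeries

open PowerSeries Finset

theorem stmt15_general (k n s : ℕ) (hs : 0 < s) (hns : ¬ s ∣ k)
    (x : Fin n → ℂ) :
    (∑ j ∈ Finset.range (k + 1), (-1 : ℂ) ^ j * hg n x j * Hg (s - 1) n x (k - j) = 0) ∧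
    (∑ j ∈ Finset.range (k + 1), (-1 : ℂ) ^ j * eg n x j * Eg (s - 1) n x (k - j) = 0) := by
  obtain ⟨s, rfl⟩ := Nat.exists_eq_add_one_of_ne_zero hs.ne'
  rw [Nat.add_sub_cancel]
  unfold hg Hg eg Eg
  simp only [← coeff_rescale_neg_one_mul, HgS, EgS, map_prod, ← prod_mul_distrib]
  refine ⟨mem_supportedOnMultiples.1 (prod_mem fun i _ => ?_) k hns,
    mem_supportedOnMultiples.1 (prod_mem fun i _ => ?_) k hns⟩
  · rw [rescale_neg_one_inv_one_sub_C_mul_X_mul_inv_geom_sum]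
    exact inv_mem_supportedOnMultiples (one_sub_C_mul_X_pow_mem_supportedOnMultiples _ _)
  · rw [rescale_neg_one_one_add_C_mul_X_mul_geom_sum]
    exact one_sub_C_mul_X_pow_mem_supportedOnMultiples _ _

/-- If `s ∤ k` then `∑_{j=0}^{k} (-1)^j h_j H_{k-j}^{(s-1)} = 0` and
`∑_{j=0}^{k} (-1)^j e_j E_{k-j}^{(s-1)} = 0`. -/
theorem stmt15 (k n s : ℕ) (hk : 0 < k) (hn : 0 < n) (hs : 0 < s) (hns : ¬ s ∣ k)
    (x : Fin n → ℂ) :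
    (∑ j ∈ Finset.range (k + 1), (-1 : ℂ) ^ j * hg n x j * Hg (s - 1) n x (k - j) = 0) ∧
    (∑ j ∈ Finset.range (k + 1), (-1 : ℂ) ^ j * eg n x j * Eg (s - 1) n x (k - j) = 0) :=
  stmt15_general k n s hs hns x
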